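/- arXiv:1401.2185 — 6 statements merged into one kernel-verified Lean document; each statement's English description precedes it below -/
import Mathlib

section
/- Let I be a nonempty finite index set. For each i ∈ I let S_i be a nonempty finite state space, A_i a nonempty finite action set, c_i : S_i → A_i → ℝ a stage cost, and ρ_i : S_i → A_i → S_i → ℝ transition probabilities satisfying ρ_i s a s' ≥ 0 for all s, a, s' and ∑_{s' ∈ S_i} ρ_i s a s' = 1 for all s, a. Let δ be a discount factor with 0 ≤ δ < 1. Suppose for each i ∈ I the function V_i : S_i → ℝ satisfies the per-entity Bellman equation V_i s = min_{a ∈ A_i} [(1 − δ)·c_i s a + δ·∑_{s' ∈ S_i} ρ_i s a s' · V_i s'] for all s ∈ S_i. Then the function V : (∏_{i ∈ I} S_i) → ℝ defined by V s = ∑_{i ∈ I} V_i (s i) satisfies the joint Bellman equation: for all s ∈ ∏_{i ∈ I} S_i, V s = min_{a ∈ ∏_{i ∈ I} A_i} [(1 − δ)·∑_{i ∈ I} c_i (s i) (a i) + δ·∑_{s' ∈ ∏_{i ∈ I} S_i} (∏_{i ∈ I} ρ_i (s i) (a i) (s' i)) · V s']. -/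
/-!
Under the product kernel the coordinates of the next state are independent, so the expected
value of a separable function `∑ i, V i (s' i)` is the sum of the per-entity expectations, each
computed against the marginal `ρ i`. The joint Bellman objective is therefore a sum of
per-entity objectives, one per coordinate of the joint action, and minimizing such a sum over
the product of action sets means minimizing each summand separately.
-/

open Finset

theorem Finset.inf'_univ_pi_sum {ι : Type*} [Fintype ι] [DecidableEq ι] {α : ι → Type*}
    [∀ i, Fintype (α i)] [∀ i, Nonempty (α i)] {M : Type*} [AddCommMonoid M] [LinearOrder M]
    [IsOrderedAddMonoid M] (F : ∀ i, α i → M) :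
    univ.inf' univ_nonempty (fun a : ∀ i, α i => ∑ i, F i (a i))
      = ∑ i, univ.inf' univ_nonempty (F i) := by
  refine le_antisymm ?_ (le_inf' _ _ fun a _ => sum_le_sum fun i _ => inf'_le _ (mem_univ _))
  choose a ha using fun i => exists_mem_eq_inf' (univ_nonempty (α := α i)) (F i)
  calc univ.inf' univ_nonempty (fun b : ∀ i, α i => ∑ i, F i (b i))
      ≤ ∑ i, F i (a i) := inf'_le _ (mem_univ a)
    _ = ∑ i, univ.inf' univ_nonempty (F i) := sum_congr rfl fun i _ => ((ha i).2).symm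

section ProductWeights

variable {ι : Type*} [Fintype ι] [DecidableEq ι] {κ : ι → Type*} [∀ i, Fintype (κ i)]
  {R : Type*} [CommSemiring R] (p : ∀ i, κ i → R)

theorem sum_prod_mul_apply (hp : ∀ i, ∑ y, p i y = 1) (j : ι) (f : κ j → R) :
    ∑ x : ∀ i, κ i, (∏ i, p i (x i)) * f (x j) = ∑ y, p j y * f y := by
  -- Absorb `f` into the `j`-th weight, so that the sum factors over the coordinates.
  set q := Function.update p j (fun y => p j y * f y)
  have hq : ∀ x : ∀ i, κ i, (∏ i, p i (x i)) * f (x j) = ∏ i, q i (x i) := by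
    intro x
    rw [← mul_prod_erase _ _ (mem_univ j), ← mul_prod_erase _ _ (mem_univ j)]
    have hrest : ∏ i ∈ univ.erase j, q i (x i) = ∏ i ∈ univ.erase j, p i (x i) :=
      prod_congr rfl fun i hi => by simp [q, Function.update_of_ne (ne_of_mem_erase hi)]
    simp only [hrest, q, Function.update_self]
    ring
  have hq1 : ∀ i ∈ univ.erase j, ∑ y, q i y = 1 := fun i hi => by
    simp [q, Function.update_of_ne (ne_of_mem_erase hi), hp]
  rw [sum_congr rfl fun x _ => hq x, ← Fintype.prod_sum, ← mul_prod_erase _ _ (mem_univ j),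
    prod_eq_one hq1, mul_one]
  simp [q]

theorem sum_prod_mul_sum_apply (hp : ∀ i, ∑ y, p i y = 1) (f : ∀ i, κ i → R) :
    ∑ x : ∀ i, κ i, (∏ i, p i (x i)) * ∑ i, f i (x i) = ∑ i, ∑ y, p i y * f i y := by
  simp_rw [mul_sum]
  rw [sum_comm]
  exact sum_congr rfl fun j _ => sum_prod_mul_apply p hp j (f j)

end ProductWeights

theorem stmt_0_general (I : Type*) [Fintype I] [DecidableEq I]
    (S A : I → Type*) [∀ i, Fintype (S i)]
    [∀ i, Fintype (A i)] [∀ i, Nonempty (A i)]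
    (c : ∀ i, S i → A i → ℝ) (ρ : ∀ i, S i → A i → S i → ℝ)
    (hρ1 : ∀ i (s : S i) (a : A i), ∑ s', ρ i s a s' = 1)
    (δ : ℝ)
    (V : ∀ i, S i → ℝ)
    (hV : ∀ i (s : S i), V i s = Finset.univ.inf' Finset.univ_nonempty
      (fun a : A i => (1 - δ) * c i s a + δ * ∑ s', ρ i s a s' * V i s')) :
    ∀ s : ∀ i, S i,
      (∑ i, V i (s i)) = Finset.univ.inf' Finset.univ_nonempty
        (fun a : ∀ i, A i =>
          (1 - δ) * (∑ i, c i (s i) (a i))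
            + δ * ∑ s' : ∀ i, S i, (∏ i, ρ i (s i) (a i) (s' i)) * ∑ i, V i (s' i)) := by
  intro s
  have hsep : ∀ a : ∀ i, A i,
      (1 - δ) * (∑ i, c i (s i) (a i))
        + δ * ∑ s' : ∀ i, S i, (∏ i, ρ i (s i) (a i) (s' i)) * ∑ i, V i (s' i)
      = ∑ i, ((1 - δ) * c i (s i) (a i) + δ * ∑ s', ρ i (s i) (a i) s' * V i s') := fun a => by
    rw [sum_prod_mul_sum_apply _ (fun i => hρ1 i (s i) (a i)), mul_sum, mul_sum,
      ← sum_add_distrib]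
  simp_rw [hsep]
  rw [inf'_univ_pi_sum (fun i b => (1 - δ) * c i (s i) b + δ * ∑ s', ρ i (s i) b s' * V i s')]
  exact sum_congr rfl fun i _ => hV i (s i)

/-- Lemma 1 (decomposition): with additively separable stage costs and a product
transition kernel, the sum of per-entity Bellman fixed points satisfies the joint
Bellman equation on the product state/action spaces. -/
theorem stmt_0 (I : Type*) [Fintype I] [Nonempty I] [DecidableEq I]
    (S A : I → Type*) [∀ i, Fintype (S i)] [∀ i, Nonempty (S i)]
    [∀ i, Fintype (A i)] [∀ i, Nonempty (A i)]
    (c : ∀ i, S i → A i → ℝ) (ρ : ∀ i, S i → A i → S i → ℝ)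
    (hρ0 : ∀ i (s : S i) (a : A i) (s' : S i), 0 ≤ ρ i s a s')
    (hρ1 : ∀ i (s : S i) (a : A i), ∑ s', ρ i s a s' = 1)
    (δ : ℝ) (hδ0 : 0 ≤ δ) (hδ1 : δ < 1)
    (V : ∀ i, S i → ℝ)
    (hV : ∀ i (s : S i), V i s = Finset.univ.inf' Finset.univ_nonempty
      (fun a : A i => (1 - δ) * c i s a + δ * ∑ s', ρ i s a s' * V i s')) :
    ∀ s : ∀ i, S i,
      (∑ i, V i (s i)) = Finset.univ.inf' Finset.univ_nonempty
        (fun a : ∀ i, A i =>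
          (1 - δ) * (∑ i, c i (s i) (a i))
            + δ * ∑ s' : ∀ i, S i, (∏ i, ρ i (s i) (a i) (s' i)) * ∑ i, V i (s' i)) :=
  stmt_0_general I S A c ρ hρ1 δ V hV
end

section
/- Let G be a nonempty finite index set of generators. For each g ∈ G let E_g be a nonempty finite set of generation-cost states, A_g a nonempty finite subset of ℝ of production levels, c_g : E_g → A_g → ℝ a generation cost, and ρ_g : E_g → A_g → E_g → ℝ transition probabilities satisfying ρ_g ε a ε' ≥ 0 for all ε, a, ε' and ∑_{ε' ∈ E_g} ρ_g ε a ε' = 1 for all ε, a. Let δ satisfy 0 ≤ δ < 1 and let y : G → ℝ be a vector of conjectured prices. Suppose for each g ∈ G the function V_g : E_g → ℝ satisfies V_g ε = min_{a ∈ A_g} [(1 − δ)·(c_g ε a + y g · a) + δ·∑_{ε' ∈ E_g} ρ_g ε a ε' · V_g ε'] for all ε ∈ E_g. Then the function V_0 : (∏_{g ∈ G} E_g) → ℝ defined by V_0 ε = ∑_{g ∈ G} V_g (ε g) satisfies, for all ε ∈ ∏_{g ∈ G} E_g, V_0 ε = min_{a ∈ ∏_{g ∈ G} A_g} [(1 −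 δ)·(∑_{g ∈ G} c_g (ε g) (a g) + ∑_{g ∈ G} y g · a g) + δ·∑_{ε' ∈ ∏_{g ∈ G} E_g} (∏_{g ∈ G} ρ_g (ε g) (a g) (ε' g)) · V_0 ε']. -/
/-!
Cost and price term are additively separable across generators, and so is the
expected continuation value: against a product of probability vectors, the
expectation of `∑ g, V g (ε' g)` is the sum of the single-generator expectations,
because each marginal of a product law is its own factor. Hence the joint Bellman
right-hand side at `a` is `∑ g, f g (a g)` with `f g` the single-generator one,
and the minimum of a separable function over a product of finite sets is the sum
of the minima, i.e. `∑ g, V g (ε g)` by the single-generator Bellman equations.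
-/

open Finset

section Marginal

variable {ι R : Type*} [Fintype ι] [DecidableEq ι] [CommSemiring R]
  {κ : ι → Type*} [∀ i, Fintype (κ i)]

theorem Fintype.sum_prod_mul_eval_of_sum_eq_one {r : ∀ i, κ i → R} (hr : ∀ i, ∑ k, r i k = 1)
    (i₀ : ι) (v : κ i₀ → R) :
    ∑ x : ∀ i, κ i, (∏ i, r i (x i)) * v (x i₀) = ∑ k, r i₀ k * v k := by
  -- Writing `v (x i₀)` as a product over all coordinates makes the summand a product,
  -- so the sum over `x` factorises and every factor but the `i₀`-th is `∑ k, r i k = 1`.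
  set w : ∀ i, κ i → R := Pi.mulSingle i₀ v
  have hv : ∀ x : ∀ i, κ i, v (x i₀) = ∏ i, w i (x i) := fun x => by
    rw [prod_eq_single i₀ fun i hi => by simp [w, Pi.mulSingle_eq_of_ne hi]]
    simp [w]
  calc ∑ x : ∀ i, κ i, (∏ i, r i (x i)) * v (x i₀)
      = ∑ x : ∀ i, κ i, ∏ i, r i (x i) * w i (x i) := by simp only [hv, prod_mul_distrib]
    _ = ∏ i, ∑ k, r i k * w i k := by rw [prod_sum]
    _ = ∑ k, r i₀ k * v k := by
        rw [prod_eq_single i₀ fun i hi => by simp [w, Pi.mulSingle_eq_of_ne hi, hr]]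
        simp [w]

theorem Fintype.sum_prod_mul_sum_eval_of_sum_eq_one {r : ∀ i, κ i → R} (hr : ∀ i, ∑ k, r i k = 1)
    (v : ∀ i, κ i → R) :
    ∑ x : ∀ i, κ i, (∏ i, r i (x i)) * ∑ i, v i (x i) = ∑ i, ∑ k, r i k * v i k := by
  simp only [mul_sum]
  rw [sum_comm]
  exact Finset.sum_congr rfl fun i _ => sum_prod_mul_eval_of_sum_eq_one hr i (v i)

end Marginal

theorem Finset.sum_inf'_univ_eq_inf'_univ_sum {ι M : Type*} [Fintype ι] [DecidableEq ι]
    [LinearOrder M] [AddCommMonoid M] [IsOrderedAddMonoid M]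
    {α : ι → Type*} [∀ i, Fintype (α i)] [∀ i, Nonempty (α i)] (f : ∀ i, α i → M) :
    ∑ i, univ.inf' univ_nonempty (f i) =
      univ.inf' univ_nonempty (fun a : ∀ i, α i => ∑ i, f i (a i)) := by
  refine le_antisymm (le_inf' _ _ fun a _ => sum_le_sum fun i _ => inf'_le _ (mem_univ _)) ?_
  choose a _ ha using fun i => exists_mem_eq_inf' univ_nonempty (f i)
  calc univ.inf' univ_nonempty (fun a : ∀ i, α i => ∑ i, f i (a i))
      ≤ ∑ i, f i (a i) := inf'_le _ (mem_univ a)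
    _ = ∑ i, univ.inf' univ_nonempty (f i) := sum_congr rfl fun i _ => (ha i).symm

theorem stmt_1_general (G : Type*) [Fintype G] [DecidableEq G]
    (E : G → Type*) [∀ g, Fintype (E g)]
    (A : G → Set ℝ) [∀ g, Fintype (A g)] [∀ g, Nonempty (A g)]
    (c : ∀ g, E g → A g → ℝ) (ρ : ∀ g, E g → A g → E g → ℝ)
    (hρ1 : ∀ g (ε : E g) (a : A g), ∑ ε', ρ g ε a ε' = 1)
    (δ : ℝ)
    (y : G → ℝ)
    (V : ∀ g, E g → ℝ)
    (hV : ∀ g (ε : E g), V g ε = Finset.univ.inf' Finset.univ_nonempty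
      (fun a : A g => (1 - δ) * (c g ε a + y g * (a : ℝ))
        + δ * ∑ ε', ρ g ε a ε' * V g ε')) :
    ∀ ε : ∀ g, E g,
      (∑ g, V g (ε g)) = Finset.univ.inf' Finset.univ_nonempty
        (fun a : ∀ g, A g =>
          (1 - δ) * ((∑ g, c g (ε g) (a g)) + ∑ g, y g * ((a g : ℝ)))
            + δ * ∑ ε' : ∀ g, E g,
                (∏ g, ρ g (ε g) (a g) (ε' g)) * ∑ g, V g (ε' g)) := by
  intro ε
  set f : ∀ g, A g → ℝ := fun g a =>
    (1 - δ) * (c g (ε g) a + y g * (a : ℝ)) + δ * ∑ ε', ρ g (ε g) a ε' * V g ε'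
  have separable : ∀ a : ∀ g, A g,
      (1 - δ) * ((∑ g, c g (ε g) (a g)) + ∑ g, y g * ((a g : ℝ)))
        + δ * ∑ ε' : ∀ g, E g, (∏ g, ρ g (ε g) (a g) (ε' g)) * ∑ g, V g (ε' g)
      = ∑ g, f g (a g) := fun a => by
    rw [Fintype.sum_prod_mul_sum_eval_of_sum_eq_one (fun g => hρ1 g (ε g) (a g))]
    simp only [f, sum_add_distrib, ← mul_sum]
  calc ∑ g, V g (ε g) = ∑ g, univ.inf' univ_nonempty (f g) := sum_congr rfl fun g _ => hV g (ε g)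
    _ = _ := by
      rw [sum_inf'_univ_eq_inf'_univ_sum]
      exact inf'_congr _ rfl fun a _ => (separable a).symm

/-- Theorem 2: the ISO's dynamic program, with total generation cost plus a
price term linear in production levels, decomposes across generators. -/
theorem stmt_1 (G : Type*) [Fintype G] [Nonempty G] [DecidableEq G]
    (E : G → Type*) [∀ g, Fintype (E g)] [∀ g, Nonempty (E g)]
    (A : G → Set ℝ) [∀ g, Fintype (A g)] [∀ g, Nonempty (A g)]
    (c : ∀ g, E g → A g → ℝ) (ρ : ∀ g, E g → A g → E g → ℝ)
    (hρ0 : ∀ g (ε : E g) (a : A g) (ε' : E g), 0 ≤ ρ g ε a ε')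
    (hρ1 : ∀ g (ε : E g) (a : A g), ∑ ε', ρ g ε a ε' = 1)
    (δ : ℝ) (hδ0 : 0 ≤ δ) (hδ1 : δ < 1)
    (y : G → ℝ)
    (V : ∀ g, E g → ℝ)
    (hV : ∀ g (ε : E g), V g ε = Finset.univ.inf' Finset.univ_nonempty
      (fun a : A g => (1 - δ) * (c g ε a + y g * (a : ℝ))
        + δ * ∑ ε', ρ g ε a ε' * V g ε')) :
    ∀ ε : ∀ g, E g,
      (∑ g, V g (ε g)) = Finset.univ.inf' Finset.univ_nonempty
        (fun a : ∀ g, A g =>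
          (1 - δ) * ((∑ g, c g (ε g) (a g)) + ∑ g, y g * ((a g : ℝ)))
            + δ * ∑ ε' : ∀ g, E g,
                (∏ g, ρ g (ε g) (a g) (ε' g)) * ∑ g, V g (ε' g)) :=
  stmt_1_general G E A c ρ hρ1 δ y V hV
end

section
/- Let S be a nonempty finite state space, A a nonempty finite action set, N a natural number, c : S → A → ℝ a stage cost, f : S → A → (Fin N → ℝ) a constraint function, δ a discount factor with 0 ≤ δ < 1, and ρ : S → A → S → ℝ transition probabilities satisfying ρ s a s' ≥ 0 for all s, a, s' and ∑_{s' ∈ S} ρ s a s' = 1 for all s, a. For λ ∈ Fin N → ℝ, say that V : S → ℝ is a λ-penalized value function if V s = max_{a ∈ A} [(1 − δ)·(c s a + ∑_{n} λ n · f s a n) + δ·∑_{s' ∈ S} ρ s a s' · V s'] for all s. If λ₁, λ₂ ∈ Fin N → ℝ, t ∈ ℝ with 0 ≤ t ≤ 1, and V₁, V₂, V₃ : S → ℝ are λ₁-, λ₂-, and (t • λ₁ + (1 − t) • λ₂)-penalized value functions respectively, then V₃ s ≤ t·V₁ s + (1 − t)·V₂ s for all s ∈ S. -/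
/-!
Write `W = t • V₁ + (1 - t) • V₂` and `λ = t • λ₁ + (1 - t) • λ₂`. The Bellman operator
`(λ, V) ↦ max_a Q_λ(V)(s, a)` is a maximum of functions affine in `(λ, V)`, hence jointly
convex, so it maps `(λ, W)` below `W`. As it is a `δ`-contraction in `V`, any upper bound `M`
of `V₃ - W` yields the upper bound `δ * M`, and `δ < 1` forces `V₃ - W ≤ 0`.
-/

open Finset

theorem nonpos_of_forall_upperBound_le_mul {S : Type*} [Finite S] {δ : ℝ} (hδ : δ < 1)
    {g : S → ℝ} (h : ∀ M, (∀ s, g s ≤ M) → ∀ s, g s ≤ δ * M) (s : S) : g s ≤ 0 := by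
  have : Nonempty S := ⟨s⟩
  obtain ⟨s₀, hs₀⟩ := Finite.exists_max g
  have hcontract : g s₀ ≤ δ * g s₀ := h (g s₀) hs₀ s₀
  have hmax_nonpos : g s₀ ≤ 0 := by nlinarith
  exact (hs₀ s).trans hmax_nonpos

theorem sum_mul_le_of_le {S : Type*} [Fintype S] {p g : S → ℝ} (hp0 : ∀ s, 0 ≤ p s)
    (hp1 : ∑ s, p s = 1) {M : ℝ} (hg : ∀ s, g s ≤ M) : ∑ s, p s * g s ≤ M :=
  calc ∑ s, p s * g s ≤ ∑ s, p s * M := sum_le_sum fun s _ => by gcongr; exacts [hp0 s, hg s]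
    _ = M := by rw [← sum_mul, hp1, one_mul]

namespace PenalizedMDP

variable {S A : Type*} [Fintype S] {N : ℕ}
  (c : S → A → ℝ) (f : S → A → Fin N → ℝ) (δ : ℝ) (ρ : S → A → S → ℝ)

def qValue (lam : Fin N → ℝ) (V : S → ℝ) (s : S) (a : A) : ℝ :=
  (1 - δ) * (c s a + ∑ n, lam n * f s a n) + δ * ∑ s', ρ s a s' * V s'

def bellman [Fintype A] [Nonempty A] (lam : Fin N → ℝ) (V : S → ℝ) (s : S) : ℝ :=
  univ.sup' univ_nonempty (qValue c f δ ρ lam V s)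

theorem qValue_convexComb (lam₁ lam₂ : Fin N → ℝ) (V₁ V₂ : S → ℝ) (t : ℝ) (s : S) (a : A) :
    qValue c f δ ρ (t • lam₁ + (1 - t) • lam₂) (t • V₁ + (1 - t) • V₂) s a
      = t * qValue c f δ ρ lam₁ V₁ s a + (1 - t) * qValue c f δ ρ lam₂ V₂ s a := by
  simp only [qValue, Pi.add_apply, Pi.smul_apply, smul_eq_mul, add_mul, mul_add,
    sum_add_distrib, mul_sum, mul_assoc, mul_left_comm _ t, mul_left_comm _ (1 - t)]
  ring

theorem bellman_convexComb_le [Fintype A] [Nonempty A] (lam₁ lam₂ : Fin N → ℝ) (V₁ V₂ : S → ℝ) {t : ℝ}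
    (ht0 : 0 ≤ t) (ht1 : t ≤ 1) (s : S) :
    bellman c f δ ρ (t • lam₁ + (1 - t) • lam₂) (t • V₁ + (1 - t) • V₂) s
      ≤ t * bellman c f δ ρ lam₁ V₁ s + (1 - t) * bellman c f δ ρ lam₂ V₂ s := by
  refine sup'_le _ _ fun a _ => ?_
  rw [qValue_convexComb]
  have ht1' : 0 ≤ 1 - t := by linarith
  gcongr <;> exact le_sup' _ (mem_univ a)

variable {δ ρ}

theorem bellman_le_add [Fintype A] [Nonempty A] (hδ0 : 0 ≤ δ) (hρ0 : ∀ s a s', 0 ≤ ρ s a s')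
    (hρ1 : ∀ s a, ∑ s', ρ s a s' = 1) (lam : Fin N → ℝ) {V W : S → ℝ} {M : ℝ}
    (hM : ∀ s, V s - W s ≤ M) (s : S) :
    bellman c f δ ρ lam V s ≤ bellman c f δ ρ lam W s + δ * M := by
  refine sup'_le _ _ fun a _ => ?_
  have hQ : qValue c f δ ρ lam V s a = qValue c f δ ρ lam W s a
      + δ * ∑ s', ρ s a s' * (V s' - W s') := by
    simp only [qValue, mul_sub, sum_sub_distrib]
    ring
  rw [hQ]
  gcongr
  · exact le_sup' _ (mem_univ a)
  · exact sum_mul_le_of_le (hρ0 s a) (hρ1 s a) hM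

end PenalizedMDP

open PenalizedMDP

theorem stmt_9_general (S A : Type*) [Fintype S] [Fintype A] [Nonempty A]
    (N : ℕ) (c : S → A → ℝ) (f : S → A → Fin N → ℝ)
    (δ : ℝ) (hδ0 : 0 ≤ δ) (hδ1 : δ < 1)
    (ρ : S → A → S → ℝ)
    (hρ0 : ∀ s a s', 0 ≤ ρ s a s') (hρ1 : ∀ s a, ∑ s', ρ s a s' = 1)
    (lam₁ lam₂ : Fin N → ℝ) (t : ℝ) (ht0 : 0 ≤ t) (ht1 : t ≤ 1)
    (V₁ V₂ V₃ : S → ℝ)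
    (h₁ : ∀ s, V₁ s = Finset.univ.sup' Finset.univ_nonempty
      (fun a : A => (1 - δ) * (c s a + ∑ n, lam₁ n * f s a n)
        + δ * ∑ s', ρ s a s' * V₁ s'))
    (h₂ : ∀ s, V₂ s = Finset.univ.sup' Finset.univ_nonempty
      (fun a : A => (1 - δ) * (c s a + ∑ n, lam₂ n * f s a n)
        + δ * ∑ s', ρ s a s' * V₂ s'))
    (h₃ : ∀ s, V₃ s = Finset.univ.sup' Finset.univ_nonempty
      (fun a : A => (1 - δ) * (c s a + ∑ n, (t • lam₁ + (1 - t) • lam₂) n * f s a n)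
        + δ * ∑ s', ρ s a s' * V₃ s')) :
    ∀ s, V₃ s ≤ t * V₁ s + (1 - t) * V₂ s := by
  set W : S → ℝ := t • V₁ + (1 - t) • V₂
  suffices ∀ s, V₃ s - W s ≤ 0 from fun s => sub_nonpos.mp (this s)
  refine nonpos_of_forall_upperBound_le_mul hδ1 fun M hM s => ?_
  have hBellman : V₃ s ≤ W s + δ * M :=
    calc V₃ s = bellman c f δ ρ (t • lam₁ + (1 - t) • lam₂) V₃ s := h₃ s
      _ ≤ bellman c f δ ρ (t • lam₁ + (1 - t) • lam₂) W s + δ * M :=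
        bellman_le_add c f hδ0 hρ0 hρ1 _ hM s
      _ ≤ t * bellman c f δ ρ lam₁ V₁ s + (1 - t) * bellman c f δ ρ lam₂ V₂ s + δ * M := by
        gcongr
        exact bellman_convexComb_le c f δ ρ lam₁ lam₂ V₁ V₂ ht0 ht1 s
      _ = W s + δ * M := by unfold bellman qValue; rw [← h₁ s, ← h₂ s]; rfl
  linarith

/-- The optimal Lagrangian-penalized value function is convex in the multiplier
vector λ. -/
theorem stmt_9 (S A : Type*) [Fintype S] [Nonempty S] [Fintype A] [Nonempty A]
    (N : ℕ) (c : S → A → ℝ) (f : S → A → Fin N → ℝ)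
    (δ : ℝ) (hδ0 : 0 ≤ δ) (hδ1 : δ < 1)
    (ρ : S → A → S → ℝ)
    (hρ0 : ∀ s a s', 0 ≤ ρ s a s') (hρ1 : ∀ s a, ∑ s', ρ s a s' = 1)
    (lam₁ lam₂ : Fin N → ℝ) (t : ℝ) (ht0 : 0 ≤ t) (ht1 : t ≤ 1)
    (V₁ V₂ V₃ : S → ℝ)
    (h₁ : ∀ s, V₁ s = Finset.univ.sup' Finset.univ_nonempty
      (fun a : A => (1 - δ) * (c s a + ∑ n, lam₁ n * f s a n)
        + δ * ∑ s', ρ s a s' * V₁ s'))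
    (h₂ : ∀ s, V₂ s = Finset.univ.sup' Finset.univ_nonempty
      (fun a : A => (1 - δ) * (c s a + ∑ n, lam₂ n * f s a n)
        + δ * ∑ s', ρ s a s' * V₂ s'))
    (h₃ : ∀ s, V₃ s = Finset.univ.sup' Finset.univ_nonempty
      (fun a : A => (1 - δ) * (c s a + ∑ n, (t • lam₁ + (1 - t) • lam₂) n * f s a n)
        + δ * ∑ s', ρ s a s' * V₃ s')) :
    ∀ s, V₃ s ≤ t * V₁ s + (1 - t) * V₂ s :=
  stmt_9_general S A N c f δ hδ0 hδ1 ρ hρ0 hρ1 lam₁ lam₂ t ht0 ht1 V₁ V₂ V₃ h₁ h₂ h₃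
end

section
/- Let S be a nonempty finite state space, A a nonempty finite action set, c : S → A → ℝ a stage cost, δ a discount factor with 0 ≤ δ < 1, and ρ : S → A → S → ℝ transition probabilities satisfying ρ s a s' ≥ 0 for all s, a, s' and ∑_{s' ∈ S} ρ s a s' = 1 for all s, a. Suppose V* : S → ℝ satisfies the Bellman equation V* s = min_{a ∈ A} [(1 − δ)·c s a + δ·∑_{s' ∈ S} ρ s a s' · V* s'] for all s, and suppose π : S → A is a stationary policy and W : S → ℝ satisfies W s = (1 − δ)·c s (π s) + δ·∑_{s' ∈ S} ρ s (π s) s' · W s' for all s. Then V* s ≤ W s for all s ∈ S. -/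
open Finset

section Stochastic

variable {S : Type*} [Fintype S]

theorem sum_mul_le_of_stochastic {p f : S → ℝ} {M : ℝ} (hp0 : ∀ s, 0 ≤ p s)
    (hp1 : ∑ s, p s = 1) (hf : ∀ s, f s ≤ M) : ∑ s, p s * f s ≤ M :=
  calc ∑ s, p s * f s ≤ ∑ s, p s * M :=
        sum_le_sum fun s _ => mul_le_mul_of_nonneg_left (hf s) (hp0 s)
    _ = M := by rw [← sum_mul, hp1, one_mul]

/-- At a maximiser `s₀` of `D` the hypothesis gives `D s₀ ≤ δ * D s₀`, so `D s₀ ≤ 0`. -/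
theorem nonpos_of_le_discounted_stochastic {P : S → S → ℝ} {D : S → ℝ} {δ : ℝ}
    (hδ0 : 0 ≤ δ) (hδ1 : δ < 1) (hP0 : ∀ s s', 0 ≤ P s s') (hP1 : ∀ s, ∑ s', P s s' = 1)
    (hD : ∀ s, D s ≤ δ * ∑ s', P s s' * D s') (s : S) : D s ≤ 0 := by
  obtain ⟨s₀, -, hs₀⟩ := exists_max_image univ D ⟨s, mem_univ s⟩
  have hle : ∀ t, D t ≤ δ * D s₀ := fun t =>
    (hD t).trans <| mul_le_mul_of_nonneg_left
      (sum_mul_le_of_stochastic (hP0 t) (hP1 t) fun t' => hs₀ t' (mem_univ t')) hδ0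
  have hmax : D s₀ ≤ 0 := by nlinarith [hle s₀]
  exact (hle s).trans (mul_nonpos_of_nonneg_of_nonpos hδ0 hmax)

end Stochastic

theorem stmt_10_general (S A : Type*) [Fintype S] [Fintype A] [Nonempty A]
    (c : S → A → ℝ) (δ : ℝ) (hδ0 : 0 ≤ δ) (hδ1 : δ < 1)
    (ρ : S → A → S → ℝ)
    (hρ0 : ∀ s a s', 0 ≤ ρ s a s') (hρ1 : ∀ s a, ∑ s', ρ s a s' = 1)
    (Vstar : S → ℝ)
    (hVstar : ∀ s, Vstar s = Finset.univ.inf' Finset.univ_nonempty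
      (fun a : A => (1 - δ) * c s a + δ * ∑ s', ρ s a s' * Vstar s'))
    (π : S → A) (W : S → ℝ)
    (hW : ∀ s, W s = (1 - δ) * c s (π s) + δ * ∑ s', ρ s (π s) s' * W s') :
    ∀ s, Vstar s ≤ W s := by
  have hgap : ∀ s, Vstar s - W s ≤ δ * ∑ s', ρ s (π s) s' * (Vstar s' - W s') := by
    intro s
    have hVπ : Vstar s ≤ (1 - δ) * c s (π s) + δ * ∑ s', ρ s (π s) s' * Vstar s' :=
      hVstar s ▸ inf'_le _ (mem_univ (π s))
    simp only [mul_sub, sum_sub_distrib]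
    linarith [hW s]
  intro s
  linarith [nonpos_of_le_discounted_stochastic hδ0 hδ1 (fun s => hρ0 s (π s))
    (fun s => hρ1 s (π s)) hgap s]

/-- The Bellman fixed point is a lower bound, at every state, on the value of
every stationary policy. -/
theorem stmt_10 (S A : Type*) [Fintype S] [Nonempty S] [Fintype A] [Nonempty A]
    (c : S → A → ℝ) (δ : ℝ) (hδ0 : 0 ≤ δ) (hδ1 : δ < 1)
    (ρ : S → A → S → ℝ)
    (hρ0 : ∀ s a s', 0 ≤ ρ s a s') (hρ1 : ∀ s a, ∑ s', ρ s a s' = 1)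
    (Vstar : S → ℝ)
    (hVstar : ∀ s, Vstar s = Finset.univ.inf' Finset.univ_nonempty
      (fun a : A => (1 - δ) * c s a + δ * ∑ s', ρ s a s' * Vstar s'))
    (π : S → A) (W : S → ℝ)
    (hW : ∀ s, W s = (1 - δ) * c s (π s) + δ * ∑ s', ρ s (π s) s' * W s') :
    ∀ s, Vstar s ≤ W s :=
  stmt_10_general S A c δ hδ0 hδ1 ρ hρ0 hρ1 Vstar hVstar π W hW
end

section
/- Let S be a nonempty finite state space, A a nonempty finite action set, c : S → A → ℝ a stage cost, δ a discount factor with 0 ≤ δ < 1, and ρ : S → A → S → ℝ transition probabilities satisfying ρ s a s' ≥ 0 for all s, a, s' and ∑_{s' ∈ S} ρ s a s' = 1 for all s, a. Suppose V* : S → ℝ satisfies V* s = min_{a ∈ A} [(1 − δ)·c s a + δ·∑_{s' ∈ S} ρ s a s' · V* s'] for all s, and suppose W : (S → A) → S → ℝ is a family of functions such that for every stationary policy π : S → A, W π s = (1 − δ)·c s (π s) + δ·∑_{s' ∈ S} ρ s (π s) s' · W π s' for all s. Then for every s ∈ S, V* s = min_{π : S → A} W π s, where the minimum is over the (finite) set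 of all stationary policies. -/
/-!
A policy value `W π` is the fixed point of a monotone `δ`-contraction, so any subsolution of
its Bellman equation lies below it. `V*` is such a subsolution for every `π`, giving
`V* ≤ W π`; for a policy that picks a minimising action at each state, `V*` solves the same
equation as `W π`, and comparing in both directions gives equality.
-/

open Finset

section DiscountedKernel

variable {S : Type*} [Fintype S] {p : S → S → ℝ} {δ : ℝ}

lemma nonpos_of_le_discounted_avg (hδ0 : 0 ≤ δ) (hδ1 : δ < 1)
    (hp0 : ∀ s s', 0 ≤ p s s') (hp1 : ∀ s, ∑ s', p s s' = 1)
    {f : S → ℝ} (hf : ∀ s, f s ≤ δ * ∑ s', p s s' * f s') (s : S) : f s ≤ 0 := by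
  have : Nonempty S := ⟨s⟩
  obtain ⟨s₀, hs₀⟩ := Finite.exists_max f
  have hmax : f s₀ ≤ δ * f s₀ :=
    calc f s₀ ≤ δ * ∑ s', p s₀ s' * f s' := hf s₀
      _ ≤ δ * ∑ s', p s₀ s' * f s₀ := by
        gcongr with s' _
        · exact hp0 s₀ s'
        · exact hs₀ s'
      _ = δ * f s₀ := by rw [← sum_mul, hp1, one_mul]
  have : f s₀ ≤ 0 := by nlinarith
  exact (hs₀ s).trans this

lemma le_of_bellman_sub_super (hδ0 : 0 ≤ δ) (hδ1 : δ < 1)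
    (hp0 : ∀ s s', 0 ≤ p s s') (hp1 : ∀ s, ∑ s', p s s' = 1) {r u w : S → ℝ}
    (hu : ∀ s, u s ≤ r s + δ * ∑ s', p s s' * u s')
    (hw : ∀ s, r s + δ * ∑ s', p s s' * w s' ≤ w s) (s : S) : u s ≤ w s := by
  have hdiff : ∀ s, u s - w s ≤ δ * ∑ s', p s s' * (u s' - w s') := by
    intro s
    simp only [mul_sub, sum_sub_distrib]
    linarith [hu s, hw s]
  linarith [nonpos_of_le_discounted_avg hδ0 hδ1 hp0 hp1 hdiff s]

end DiscountedKernel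

theorem stmt_11_general (S A : Type*) [Fintype S] [DecidableEq S]
    [Fintype A] [Nonempty A]
    (c : S → A → ℝ) (δ : ℝ) (hδ0 : 0 ≤ δ) (hδ1 : δ < 1)
    (ρ : S → A → S → ℝ)
    (hρ0 : ∀ s a s', 0 ≤ ρ s a s') (hρ1 : ∀ s a, ∑ s', ρ s a s' = 1)
    (Vstar : S → ℝ)
    (hVstar : ∀ s, Vstar s = Finset.univ.inf' Finset.univ_nonempty
      (fun a : A => (1 - δ) * c s a + δ * ∑ s', ρ s a s' * Vstar s'))
    (W : (S → A) → S → ℝ)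
    (hW : ∀ (π : S → A) (s : S),
      W π s = (1 - δ) * c s (π s) + δ * ∑ s', ρ s (π s) s' * W π s') :
    ∀ s, Vstar s = Finset.univ.inf' Finset.univ_nonempty
      (fun π : S → A => W π s) := by
  have compare (π : S → A) {u w : S → ℝ}
      (hu : ∀ s, u s ≤ (1 - δ) * c s (π s) + δ * ∑ s', ρ s (π s) s' * u s')
      (hw : ∀ s, (1 - δ) * c s (π s) + δ * ∑ s', ρ s (π s) s' * w s' ≤ w s) (s : S) :
      u s ≤ w s :=
    le_of_bellman_sub_super hδ0 hδ1 (fun s => hρ0 s (π s)) (fun s => hρ1 s (π s)) hu hw s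
  have hle (π : S → A) (s : S) : Vstar s ≤ W π s :=
    compare π (fun s => (hVstar s).trans_le (inf'_le _ (mem_univ (π s))))
      (fun s => (hW π s).ge) s
  have hgreedy (s : S) : ∃ a, Vstar s = (1 - δ) * c s a + δ * ∑ s', ρ s a s' * Vstar s' := by
    obtain ⟨a, -, ha⟩ := exists_mem_eq_inf' (univ_nonempty (α := A))
      (fun a => (1 - δ) * c s a + δ * ∑ s', ρ s a s' * Vstar s')
    exact ⟨a, (hVstar s).trans ha⟩
  choose πg hπg using hgreedy
  intro s
  refine le_antisymm (le_inf' _ _ fun π _ => hle π s) ?_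
  exact (inf'_le _ (mem_univ πg)).trans
    (compare πg (fun s => (hW πg s).le) (fun s => (hπg s).ge) s)

/-- Sufficiency of stationary deterministic policies: the Bellman fixed point
equals, at every state, the minimum over all stationary policies of their
policy value functions. -/
theorem stmt_11 (S A : Type*) [Fintype S] [Nonempty S] [DecidableEq S]
    [Fintype A] [Nonempty A]
    (c : S → A → ℝ) (δ : ℝ) (hδ0 : 0 ≤ δ) (hδ1 : δ < 1)
    (ρ : S → A → S → ℝ)
    (hρ0 : ∀ s a s', 0 ≤ ρ s a s') (hρ1 : ∀ s a, ∑ s', ρ s a s' = 1)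
    (Vstar : S → ℝ)
    (hVstar : ∀ s, Vstar s = Finset.univ.inf' Finset.univ_nonempty
      (fun a : A => (1 - δ) * c s a + δ * ∑ s', ρ s a s' * Vstar s'))
    (W : (S → A) → S → ℝ)
    (hW : ∀ (π : S → A) (s : S),
      W π s = (1 - δ) * c s (π s) + δ * ∑ s', ρ s (π s) s' * W π s') :
    ∀ s, Vstar s = Finset.univ.inf' Finset.univ_nonempty
      (fun π : S → A => W π s) :=
  stmt_11_general S A c δ hδ0 hδ1 ρ hρ0 hρ1 Vstar hVstar W hW
end

section
/- Let S be a nonempty finite state space, A a nonempty finite action set, c : S → A → ℝ a stage cost, δ a discount factor with 0 ≤ δ < 1, and ρ : S → A → S → ℝ transition probabilities satisfying ρ s a s' ≥ 0 for all s, a, s' and ∑_{s' ∈ S} ρ s a s' = 1 for all s, a. Suppose W : (S → A) → S → ℝ is a family of functions such that for every stationary policy π : S → A, W π s = (1 − δ)·c s (π s) + δ·∑_{s' ∈ S} ρ s (π s) s' · W π s' for all s. If a stationary policy π̂ : S → A satisfies ∑_{s ∈ S} W π̂ s ≤ ∑_{s ∈ S} W π s for every stationary policy π : S → A, then W π̂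 s ≤ W π s for every stationary policy π and every state s ∈ S. -/
/-!
If `π` did better than `π̂` at some state, the policy `π'` that follows `π` exactly where `π` does
better and `π̂` elsewhere would satisfy `T_{π'} V ≤ V` for `V = min (W π̂) (W π)`, where `T_{π'}` is
its Bellman operator. By the maximum principle for discounted stochastic kernels, the fixed point
`W π'` of `T_{π'}` then lies below `V`, so its sum is strictly smaller than that of `W π̂`.
-/

open Finset

lemma nonpos_of_le_discounted_mean {S : Type*} [Fintype S] {P : S → S → ℝ}
    (hP0 : ∀ s s', 0 ≤ P s s') (hP1 : ∀ s, ∑ s', P s s' = 1) {δ : ℝ} (hδ0 : 0 ≤ δ)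
    (hδ1 : δ < 1) {u : S → ℝ} (hu : ∀ s, u s ≤ δ * ∑ s', P s s' * u s') (s : S) : u s ≤ 0 := by
  have : Nonempty S := ⟨s⟩
  obtain ⟨t, ht⟩ := Finite.exists_max u
  have hmean : ∑ s', P t s' * u s' ≤ u t :=
    calc ∑ s', P t s' * u s' ≤ ∑ s', P t s' * u t :=
          sum_le_sum fun s' _ => mul_le_mul_of_nonneg_left (ht s') (hP0 t s')
      _ = u t := by rw [← sum_mul, hP1, one_mul]
  have hmax_le : u t ≤ δ * u t := (hu t).trans (mul_le_mul_of_nonneg_left hmean hδ0)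
  exact (ht s).trans (by nlinarith)

section Bellman

variable {S A : Type*} [Fintype S] (c : S → A → ℝ) (δ : ℝ) (ρ : S → A → S → ℝ)

def policyBellman (π : S → A) (V : S → ℝ) (s : S) : ℝ :=
  (1 - δ) * c s (π s) + δ * ∑ s', ρ s (π s) s' * V s'

variable {c δ ρ}

lemma policyBellman_mono (hδ0 : 0 ≤ δ) (hρ0 : ∀ s a s', 0 ≤ ρ s a s') (π : S → A) :
    Monotone (policyBellman c δ ρ π) := fun _ _ hV s => by
  unfold policyBellman
  gcongr with s'
  · exact hρ0 _ _ _
  · exact hV s'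

lemma le_of_policyBellman_le (hδ0 : 0 ≤ δ) (hδ1 : δ < 1) (hρ0 : ∀ s a s', 0 ≤ ρ s a s')
    (hρ1 : ∀ s a, ∑ s', ρ s a s' = 1) {π : S → A} {U V : S → ℝ}
    (hU : policyBellman c δ ρ π U = U) (hV : policyBellman c δ ρ π V ≤ V) : U ≤ V := by
  have hgap : ∀ s, U s - V s ≤ δ * ∑ s', ρ s (π s) s' * (U s' - V s') := fun s => by
    have hTU := congrFun hU s
    have hTV := hV s
    simp only [policyBellman, mul_sub, sum_sub_distrib] at hTU hTV ⊢
    linarith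
  exact fun s => sub_nonpos.mp <|
    nonpos_of_le_discounted_mean (fun s => hρ0 s (π s)) (fun s => hρ1 s (π s)) hδ0 hδ1 hgap s

open Classical in
noncomputable def switchPolicy (V₁ V₂ : S → ℝ) (π₁ π₂ : S → A) (s : S) : A :=
  if V₂ s < V₁ s then π₂ s else π₁ s

lemma policyBellman_switchPolicy_inf_le (hδ0 : 0 ≤ δ) (hρ0 : ∀ s a s', 0 ≤ ρ s a s')
    {π₁ π₂ : S → A} {V₁ V₂ : S → ℝ}
    (h₁ : policyBellman c δ ρ π₁ V₁ = V₁) (h₂ : policyBellman c δ ρ π₂ V₂ = V₂) :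
    policyBellman c δ ρ (switchPolicy V₁ V₂ π₁ π₂) (V₁ ⊓ V₂) ≤ V₁ ⊓ V₂ := fun s => by
  by_cases hlt : V₂ s < V₁ s
  · calc policyBellman c δ ρ (switchPolicy V₁ V₂ π₁ π₂) (V₁ ⊓ V₂) s
          = policyBellman c δ ρ π₂ (V₁ ⊓ V₂) s := by
            simp only [policyBellman, switchPolicy, if_pos hlt]
        _ ≤ policyBellman c δ ρ π₂ V₂ s := policyBellman_mono hδ0 hρ0 π₂ inf_le_right s
        _ = (V₁ ⊓ V₂) s := by rw [h₂, Pi.inf_apply, inf_eq_right.mpr hlt.le]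
  · calc policyBellman c δ ρ (switchPolicy V₁ V₂ π₁ π₂) (V₁ ⊓ V₂) s
          = policyBellman c δ ρ π₁ (V₁ ⊓ V₂) s := by
            simp only [policyBellman, switchPolicy, if_neg hlt]
        _ ≤ policyBellman c δ ρ π₁ V₁ s := policyBellman_mono hδ0 hρ0 π₁ inf_le_left s
        _ = (V₁ ⊓ V₂) s := by rw [h₁, Pi.inf_apply, inf_eq_left.mpr (not_lt.mp hlt)]

end Bellman

theorem stmt_12_general (S A : Type*) [Fintype S]
    (c : S → A → ℝ) (δ : ℝ) (hδ0 : 0 ≤ δ) (hδ1 : δ < 1)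
    (ρ : S → A → S → ℝ)
    (hρ0 : ∀ s a s', 0 ≤ ρ s a s') (hρ1 : ∀ s a, ∑ s', ρ s a s' = 1)
    (W : (S → A) → S → ℝ)
    (hW : ∀ (π : S → A) (s : S),
      W π s = (1 - δ) * c s (π s) + δ * ∑ s', ρ s (π s) s' * W π s')
    (πhat : S → A)
    (hπhat : ∀ π : S → A, ∑ s, W πhat s ≤ ∑ s, W π s) :
    ∀ (π : S → A) (s : S), W πhat s ≤ W π s := by
  intro π s₀
  by_contra! hbetter
  have hfix : ∀ π, policyBellman c δ ρ π (W π) = W π := fun π => funext fun s => (hW π s).symm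
  set π' := switchPolicy (W πhat) (W π) πhat π
  have hπ'_le : W π' ≤ W πhat ⊓ W π :=
    le_of_policyBellman_le hδ0 hδ1 hρ0 hρ1 (hfix π')
      (policyBellman_switchPolicy_inf_le hδ0 hρ0 (hfix πhat) (hfix π))
  have hsum_lt : ∑ s, W π' s < ∑ s, W πhat s :=
    calc ∑ s, W π' s ≤ ∑ s, (W πhat ⊓ W π) s := sum_le_sum fun s _ => hπ'_le s
      _ < ∑ s, W πhat s := sum_lt_sum (fun s _ => inf_le_left)
          ⟨s₀, mem_univ s₀, by simpa only [Pi.inf_apply, inf_lt_left, not_le] using hbetter⟩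
  exact (hπhat π').not_gt hsum_lt

/-- A stationary policy minimizing the policy value summed uniformly over all
initial states also minimizes the policy value at every individual state. -/
theorem stmt_12 (S A : Type*) [Fintype S] [Nonempty S] [Fintype A] [Nonempty A]
    (c : S → A → ℝ) (δ : ℝ) (hδ0 : 0 ≤ δ) (hδ1 : δ < 1)
    (ρ : S → A → S → ℝ)
    (hρ0 : ∀ s a s', 0 ≤ ρ s a s') (hρ1 : ∀ s a, ∑ s', ρ s a s' = 1)
    (W : (S → A) → S → ℝ)
    (hW : ∀ (π : S → A) (s : S),
      W π s = (1 - δ) * c s (π s) + δ * ∑ s', ρ s (π s) s' * W π s')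
    (πhat : S → A)
    (hπhat : ∀ π : S → A, ∑ s, W πhat s ≤ ∑ s, W π s) :
    ∀ (π : S → A) (s : S), W πhat s ≤ W π s :=
  stmt_12_general S A c δ hδ0 hδ1 ρ hρ0 hρ1 W hW πhat hπhat
end
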